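/- arXiv:1707.02171 — 2 statements merged into one kernel-verified Lean document; each statement's English description precedes it below -/
import Mathlib

section
/- Let X, Y, Z be pairwise disjoint node sets in a maximal PDAG G such that G is b-amenable relative to (X,Y) and Z ∩ b-Forb(X,Y,G) = ∅. Let D be a DAG represented by G and let p be a shortest proper non-causal path from X to Y in D that is d-connecting given Z. Then the corresponding path p* in G is a proper b-non-causal definite status path, and moreover for every collider subpath C_l → C ← C_r of p*, the nodes C_l and C_r are non-adjacent in G. -/
/-
Let `a b c` be consecutive on `p` with `a` and `c` adjacent. Bypassing `b` (or, when `a` or `c`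
is a collider of `p` lying in `Z`, bypassing that node instead) gives a shorter proper path that,
for each orientation of the triangle `a b c` in `D`, is still d-connecting given `Z`. By
minimality it is causal, hence b-possibly causal in `G`, so its nodes after the first lie in
`b-Forb(X, Y, G)` and are not ancestors of `Z`. This contradicts a collider of `p` or the
backward edge that `p` must keep, so `G` has an edge out of `b`; Meek's rule R1 then yields
definite status with unshielded colliders. The path is b-non-causal since otherwise, by
amenability, its first backward edge in `D` would end at a collider, an ancestor of `Z` in
`b-Forb(X, Y, G)`.
-/

/-- A partially directed graph with at most one edge between any two nodes
and no directed cycles (a PDAG). -/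
structure PDAG (V : Type) where
  dir : V → V → Prop
  undir : V → V → Prop
  undir_symm : ∀ {x y}, undir x y → undir y x
  undir_irrefl : ∀ x, ¬ undir x x
  dir_not_undir : ∀ x y, dir x y → ¬ undir x y
  acyclic : ∀ x, ¬ Relation.TransGen dir x x

namespace PDAG

variable {V : Type}

/-- There is an undirected edge between `x` and `y`. -/
def undirE (G : PDAG V) (x y : V) : Prop := G.undir x y ∨ G.undir y x

/-- `x` and `y` are adjacent. -/
def adj (G : PDAG V) (x y : V) : Prop := G.dir x y ∨ G.dir y x ∨ G.undirE x y

/-- The list of consecutive pairs of a list. -/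
def consPairs (p : List V) : List (V × V) := p.zip p.tail

/-- The list of consecutive triples of a list. -/
def triples : List V → List (V × V × V)
  | a :: b :: c :: rest => (a, b, c) :: triples (b :: c :: rest)
  | _ => []

/-- `p` is a path in `G`: at least two distinct nodes, pairwise successive adjacency. -/
def IsPath (G : PDAG V) (p : List V) : Prop :=
  2 ≤ p.length ∧ p.Nodup ∧ ∀ e ∈ consPairs p, G.adj e.1 e.2

/-- `p` is a path in `G` from `x` to `y`. -/
def PathFromTo (G : PDAG V) (p : List V) (x y : V) : Prop :=
  G.IsPath p ∧ p.head? = some x ∧ p.getLast? = some y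

/-- `p` is a causal (fully directed) path in `G`. -/
def IsCausal (G : PDAG V) (p : List V) : Prop :=
  2 ≤ p.length ∧ p.Nodup ∧ ∀ e ∈ consPairs p, G.dir e.1 e.2

/-- `p` is a non-causal path: it contains at least one edge directed backwards. -/
def NonCausal (G : PDAG V) (p : List V) : Prop :=
  G.IsPath p ∧ ∃ e ∈ consPairs p, G.dir e.2 e.1

/-- `p` is b-possibly causal in `G`: there is no edge `V_i ← V_j` for `i < j`. -/
def BPossCausal (G : PDAG V) (p : List V) : Prop :=
  G.IsPath p ∧ ∀ i j : Fin p.length, (i : ℕ) < (j : ℕ) → ¬ G.dir (p.get j) (p.get i)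

/-- `p` is b-non-causal in `G`: some edge `V_i ← V_j` with `i < j` exists in `G`. -/
def BNonCausal (G : PDAG V) (p : List V) : Prop :=
  G.IsPath p ∧ ∃ i j : Fin p.length, (i : ℕ) < (j : ℕ) ∧ G.dir (p.get j) (p.get i)

/-- A path with no edge on it pointing backwards (possibly causal in the local sense). -/
def LocalPossCausal (G : PDAG V) (p : List V) : Prop :=
  G.IsPath p ∧ ∀ e ∈ consPairs p, ¬ G.dir e.2 e.1

/-- `p` is unshielded: the outer nodes of every consecutive triple are non-adjacent. -/
def Unshielded (G : PDAG V) (p : List V) : Prop :=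
  ∀ t ∈ triples p, ¬ G.adj t.1 t.2.2

/-- The middle node of a triple is a collider. -/
def ColliderAt (G : PDAG V) (t : V × V × V) : Prop :=
  G.dir t.1 t.2.1 ∧ G.dir t.2.2 t.2.1

/-- The middle node of a triple is a definite non-collider. -/
def DefNonColliderAt (G : PDAG V) (t : V × V × V) : Prop :=
  G.dir t.2.1 t.1 ∨ G.dir t.2.1 t.2.2 ∨
    (G.undirE t.1 t.2.1 ∧ G.undirE t.2.1 t.2.2 ∧ ¬ G.adj t.1 t.2.2)

/-- `p` is a definite status path. -/
def DefiniteStatus (G : PDAG V) (p : List V) : Prop :=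
  ∀ t ∈ triples p, G.ColliderAt t ∨ G.DefNonColliderAt t

/-- `y` is a descendant of `x` in `G` (via directed paths; every node descends from itself). -/
def Desc (G : PDAG V) (x y : V) : Prop := x = y ∨ Relation.TransGen G.dir x y

/-- `p` is d-connecting given `Z`: every collider on `p` has a descendant in `Z`,
and every (definite) non-collider on `p` is not in `Z`. -/
def DConn (G : PDAG V) (p : List V) (Z : Set V) : Prop :=
  ∀ t ∈ triples p,
    (G.ColliderAt t → ∃ z ∈ Z, G.Desc t.2.1 z) ∧ (¬ G.ColliderAt t → t.2.1 ∉ Z)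

/-- `Z` blocks the path `p`. -/
def Blocked (G : PDAG V) (p : List V) (Z : Set V) : Prop := ¬ G.DConn p Z

/-- `G` is closed under Meek's orientation rules R1–R4 (a maximal PDAG). -/
def ClosedMeek (G : PDAG V) : Prop :=
  (∀ a b c, G.dir a b → G.undirE b c → ¬ G.adj a c → G.dir b c) ∧
  (∀ a b c, G.dir a b → G.dir b c → G.undirE a c → G.dir a c) ∧
  (∀ a b c d, G.undirE a b → G.undirE a c → G.undirE a d →
     G.dir c b → G.dir d b → ¬ G.adj c d → G.dir a b) ∧
  (∀ a b c d, G.undirE a b → G.undirE a c → G.undirE a d →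
     G.dir d c → G.dir b d → ¬ G.adj b c → G.dir a c)

/-- `G` is a DAG: it has no undirected edges. -/
def IsDAG (G : PDAG V) : Prop := ∀ x y, ¬ G.undir x y

/-- `G` and `H` have the same unshielded colliders. -/
def SameUC (G H : PDAG V) : Prop :=
  ∀ a b c, (G.dir a b ∧ G.dir c b ∧ ¬ G.adj a c) ↔ (H.dir a b ∧ H.dir c b ∧ ¬ H.adj a c)

/-- `H` is represented by `G`: same adjacencies, same unshielded colliders,
and every directed edge of `G` is in `H`. -/
def RepresentedBy (H G : PDAG V) : Prop :=
  (∀ x y, H.adj x y ↔ G.adj x y) ∧ SameUC H G ∧ ∀ x y, G.dir x y → H.dir x y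

/-- `p` is a proper path from (a member of) `X` to (a member of) `Y`:
only its first node lies in `X`. -/
def ProperPathFromTo (G : PDAG V) (X Y : Set V) (p : List V) : Prop :=
  G.IsPath p ∧ (∃ x ∈ X, p.head? = some x) ∧ (∃ y ∈ Y, p.getLast? = some y) ∧
    ∀ v ∈ p.tail, v ∉ X

/-- `w'` is a b-possible descendant of the node `w`. -/
def BPossDescNode (G : PDAG V) (w w' : V) : Prop :=
  w' = w ∨ ∃ p, G.BPossCausal p ∧ p.head? = some w ∧ p.getLast? = some w'

/-- The b-possible descendants of the node set `X` in `G`. -/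
def BPossDe (G : PDAG V) (X : Set V) : Set V :=
  {w | w ∈ X ∨ ∃ x ∈ X, ∃ p, G.BPossCausal p ∧ p.head? = some x ∧ p.getLast? = some w}

/-- The b-possible ancestors of the node set `X` in `G`. -/
def BPossAn (G : PDAG V) (X : Set V) : Set V :=
  {w | w ∈ X ∨ ∃ x ∈ X, ∃ p, G.BPossCausal p ∧ p.head? = some w ∧ p.getLast? = some x}

/-- The b-forbidden set relative to `(X, Y)` in `G`. -/
def BForb (G : PDAG V) (X Y : Set V) : Set V :=
  {w' | ∃ w p, w ∉ X ∧ G.ProperPathFromTo X Y p ∧ G.BPossCausal p ∧ w ∈ p ∧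
    G.BPossDescNode w w'}

/-- `G` is b-amenable relative to `(X, Y)`: every proper b-possibly causal path
from `X` to `Y` starts with a directed edge out of `X`. -/
def BAmenable (G : PDAG V) (X Y : Set V) : Prop :=
  ∀ p, G.ProperPathFromTo X Y p → G.BPossCausal p →
    ∀ a b, p.head? = some a → p.tail.head? = some b → G.dir a b

/-- The b-blocking condition: `Z` blocks every proper b-non-causal definite status
path from `X` to `Y` in `G`. -/
def BBlocking (G : PDAG V) (X Y Z : Set V) : Prop :=
  ∀ p, G.ProperPathFromTo X Y p → G.BNonCausal p → G.DefiniteStatus p → G.Blocked p Z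

/-- The b-adjustment criterion for `Z` relative to `(X, Y)` in `G`. -/
def BAdjCrit (G : PDAG V) (X Y Z : Set V) : Prop :=
  G.BAmenable X Y ∧ Z ∩ G.BForb X Y = ∅ ∧ G.BBlocking X Y Z

/-- In a DAG: `Z` blocks every proper non-causal path from `X` to `Y`. -/
def DagBlocking (D : PDAG V) (X Y Z : Set V) : Prop :=
  ∀ p, D.ProperPathFromTo X Y p → D.NonCausal p → D.Blocked p Z

/-- The canonical adjustment set `b-Adjust(X, Y, G)`. -/
def BAdjust (G : PDAG V) (X Y : Set V) : Set V :=
  G.BPossAn (X ∪ Y) \ (X ∪ Y ∪ G.BForb X Y)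

/-- `C` is a CPDAG: a maximal PDAG representing a Markov equivalence class of DAGs
in which every undirected edge is realized in both orientations by represented DAGs. -/
def IsCPDAG (C : PDAG V) : Prop :=
  C.ClosedMeek ∧ (∃ D : PDAG V, D.IsDAG ∧ RepresentedBy D C) ∧
  ∀ x y, C.undirE x y →
    (∃ D : PDAG V, D.IsDAG ∧ RepresentedBy D C ∧ D.dir x y) ∧
    (∃ D : PDAG V, D.IsDAG ∧ RepresentedBy D C ∧ D.dir y x)

section Graph

variable {G D : PDAG V} {a b c x y v : V}

lemma dir_irrefl (G : PDAG V) (x : V) : ¬ G.dir x x :=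
  fun h => G.acyclic x (.single h)

lemma dir_asymm (G : PDAG V) (h : G.dir x y) (h' : G.dir y x) : False :=
  G.acyclic x (.head h (.single h'))

lemma not_dir_cycle3 (G : PDAG V) (h₁ : G.dir a b) (h₂ : G.dir b c) (h₃ : G.dir c a) :
    False :=
  G.acyclic a (.head h₁ (.head h₂ (.single h₃)))

lemma ne_of_dir (h : G.dir x y) : x ≠ y := by
  rintro rfl
  exact G.dir_irrefl x h

lemma adj_comm : G.adj x y ↔ G.adj y x := by
  unfold adj undirE
  tauto

lemma IsDAG.dir_or_dir (hD : D.IsDAG) (h : D.adj x y) : D.dir x y ∨ D.dir y x := by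
  rcases h with h | h | h | h
  exacts [.inl h, .inr h, absurd h (hD x y), absurd h (hD y x)]

lemma RepresentedBy.dir (hrep : RepresentedBy D G) (h : G.dir x y) : D.dir x y :=
  hrep.2.2 x y h

lemma RepresentedBy.not_dir_of_transGen (hrep : RepresentedBy D G)
    (h : Relation.TransGen D.dir x y) : ¬ G.dir y x :=
  fun hyx => D.acyclic x (h.tail (hrep.dir hyx))

lemma RepresentedBy.adj_iff (hrep : RepresentedBy D G) : D.adj x y ↔ G.adj x y :=
  hrep.1 x y

lemma RepresentedBy.adj_of_collider (hrep : RepresentedBy D G) (hx : D.dir x v)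
    (hy : D.dir y v) (hG : ¬ G.dir y v) : D.adj x y := by
  by_contra hxy
  exact hG ((hrep.2.1 x v y).mp ⟨hx, hy, hxy⟩).2.1

end Graph

section Lists

variable {p : List V} {a b c : V}

lemma mem_consPairs_iff {e : V × V} :
    e ∈ consPairs p ↔ ∃ j, ∃ h : j + 1 < p.length, e = (p[j], p[j + 1]) := by
  simp only [consPairs, List.mem_iff_getElem, List.getElem_zip, List.getElem_tail,
    List.length_zip, List.length_tail]
  constructor <;> rintro ⟨j, hj, rfl⟩ <;> exact ⟨j, by omega, rfl⟩

lemma mem_triples_iff : ∀ {p : List V} {t : V × V × V},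
    t ∈ triples p ↔ ∃ j, ∃ h : j + 2 < p.length, t = (p[j], p[j + 1], p[j + 2])
  | [], _ | [_], _ | [_, _], _ => by simp [triples]
  | a :: b :: c :: l, t => by
    rw [triples, List.mem_cons, mem_triples_iff]
    constructor
    · rintro (rfl | ⟨j, h, rfl⟩)
      · exact ⟨0, by simp, rfl⟩
      · exact ⟨j + 1, by simpa using h, by simp⟩
    · rintro ⟨_ | j, h, rfl⟩
      · exact .inl rfl
      · exact .inr ⟨j, by simpa using h, by simp⟩

lemma isChain_iff_consPairs {R : V → V → Prop} :
    p.IsChain R ↔ ∀ e ∈ consPairs p, R e.1 e.2 := by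
  simp only [List.isChain_iff_getElem, mem_consPairs_iff]
  constructor
  · rintro h _ ⟨j, hj, rfl⟩
    exact h j hj
  · exact fun h j hj => h _ ⟨j, hj, rfl⟩

lemma mem_tail_of_mem_consPairs (h : (a, b) ∈ consPairs p) : b ∈ p.tail :=
  (List.of_mem_zip h).2

lemma consPairs_of_mem_triples (h : (a, b, c) ∈ triples p) :
    (a, b) ∈ consPairs p ∧ (b, c) ∈ consPairs p := by
  obtain ⟨j, hj, h⟩ := mem_triples_iff.mp h
  simp only [Prod.mk.injEq] at h
  obtain ⟨rfl, rfl, rfl⟩ := h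
  exact ⟨mem_consPairs_iff.mpr ⟨j, by omega, rfl⟩,
    mem_consPairs_iff.mpr ⟨j + 1, by omega, rfl⟩⟩

lemma eq_cons_or_mem_triples_of_mem_triples (h : (a, b, c) ∈ triples p) :
    (∃ r, p = a :: b :: c :: r) ∨ ∃ w, (w, a, b) ∈ triples p := by
  obtain ⟨_ | j, hj, h⟩ := mem_triples_iff.mp h
  · match p, hj with
    | x :: y :: z :: r, _ =>
      simp only [Prod.mk.injEq] at h
      obtain ⟨rfl, rfl, rfl⟩ := h
      exact .inl ⟨r, rfl⟩
  · simp only [Prod.mk.injEq] at h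
    obtain ⟨rfl, rfl, rfl⟩ := h
    exact .inr ⟨p[j], mem_triples_iff.mpr ⟨j, by omega, rfl⟩⟩

end Lists

section EraseIdx

variable {p : List V} {n : ℕ}

lemma length_eraseIdx_succ (hn : n + 2 < p.length) :
    (p.eraseIdx (n + 1)).length = p.length - 1 :=
  List.length_eraseIdx_of_lt (by omega)

lemma mem_consPairs_eraseIdx_cases (hn : n + 2 < p.length) {e : V × V}
    (he : e ∈ consPairs (p.eraseIdx (n + 1))) : e ∈ consPairs p ∨ e = (p[n], p[n + 2]) := by
  obtain ⟨j, hj, rfl⟩ := mem_consPairs_iff.mp he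
  rw [length_eraseIdx_succ hn] at hj
  simp only [List.getElem_eraseIdx]
  rcases lt_trichotomy j n with h | rfl | h
  · simp only [show j < n + 1 by omega, show j + 1 < n + 1 by omega, dite_true]
    exact .inl (mem_consPairs_iff.mpr ⟨j, by omega, rfl⟩)
  · simp
  · simp only [show ¬ j < n + 1 by omega, show ¬ j + 1 < n + 1 by omega, dite_false]
    exact .inl (mem_consPairs_iff.mpr ⟨j + 1, by omega, rfl⟩)

lemma mem_consPairs_eraseIdx (hn : n + 2 < p.length) {e : V × V} (he : e ∈ consPairs p)
    (he₁ : e ≠ (p[n], p[n + 1])) (he₂ : e ≠ (p[n + 1], p[n + 2])) :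
    e ∈ consPairs (p.eraseIdx (n + 1)) := by
  obtain ⟨j, hj, rfl⟩ := mem_consPairs_iff.mp he
  have hlen := length_eraseIdx_succ hn
  rcases lt_trichotomy j n with h | rfl | h
  · refine mem_consPairs_iff.mpr ⟨j, by omega, ?_⟩
    simp [List.getElem_eraseIdx, show j < n + 1 by omega, show j + 1 < n + 1 by omega]
  · exact absurd rfl he₁
  · obtain rfl | h : j = n + 1 ∨ n + 1 < j := by omega
    · exact absurd rfl he₂
    · refine mem_consPairs_iff.mpr ⟨j - 1, by omega, ?_⟩
      simp only [List.getElem_eraseIdx, show ¬ j - 1 < n + 1 by omega,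
        show ¬ j - 1 + 1 < n + 1 by omega, dite_false]
      congr 2 <;> omega

lemma bridge_mem_consPairs_eraseIdx (hn : n + 2 < p.length) :
    (p[n], p[n + 2]) ∈ consPairs (p.eraseIdx (n + 1)) :=
  mem_consPairs_iff.mpr
    ⟨n, by rw [length_eraseIdx_succ hn]; omega, by simp [List.getElem_eraseIdx]⟩

lemma mem_triples_eraseIdx_cases (hn : n + 2 < p.length) {t : V × V × V}
    (ht : t ∈ triples (p.eraseIdx (n + 1))) :
    t ∈ triples p ∨ (∃ w, t = (w, p[n], p[n + 2]) ∧ (w, p[n], p[n + 1]) ∈ triples p) ∨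
      ∃ u, t = (p[n], p[n + 2], u) ∧ (p[n + 1], p[n + 2], u) ∈ triples p := by
  obtain ⟨j, hj, rfl⟩ := mem_triples_iff.mp ht
  rw [length_eraseIdx_succ hn] at hj
  simp only [List.getElem_eraseIdx]
  rcases lt_trichotomy (j + 1) n with h | h | h
  · simp only [show j < n + 1 by omega, show j + 1 < n + 1 by omega,
      show j + 2 < n + 1 by omega, dite_true]
    exact .inl (mem_triples_iff.mpr ⟨j, by omega, rfl⟩)
  · subst h
    simp only [show j < j + 1 + 1 by omega, show j + 1 < j + 1 + 1 by omega,
      show ¬ j + 2 < j + 1 + 1 by omega, dite_true, dite_false]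
    exact .inr (.inl ⟨p[j], rfl, mem_triples_iff.mpr ⟨j, by omega, rfl⟩⟩)
  · obtain rfl | h : j = n ∨ n < j := by omega
    · simp only [show j < j + 1 by omega, show ¬ j + 1 < j + 1 by omega,
        show ¬ j + 2 < j + 1 by omega, dite_true, dite_false]
      exact .inr (.inr ⟨p[j + 3], rfl, mem_triples_iff.mpr ⟨j + 1, by omega, rfl⟩⟩)
    · simp only [show ¬ j < n + 1 by omega, show ¬ j + 1 < n + 1 by omega,
        show ¬ j + 2 < n + 1 by omega, dite_false]
      exact .inl (mem_triples_iff.mpr ⟨j + 1, by omega, rfl⟩)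

lemma tail_eraseIdx_succ : (p.eraseIdx (n + 1)).tail = p.tail.eraseIdx n := by
  cases p <;> simp

lemma mem_tail_eraseIdx (hn : n + 2 < p.length) {v : V} (hv : v ∈ p.tail) (hvb : v ≠ p[n + 1]) :
    v ∈ (p.eraseIdx (n + 1)).tail := by
  obtain ⟨j, hj, rfl⟩ := List.mem_iff_getElem.mp hv
  rw [tail_eraseIdx_succ, List.mem_eraseIdx_iff_getElem]
  refine ⟨j, hj, fun h => hvb ?_, rfl⟩
  simp [h]

lemma head?_eraseIdx_succ : (p.eraseIdx (n + 1)).head? = p.head? := by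
  cases p <;> simp

lemma getLast?_eraseIdx_succ (hn : n + 2 < p.length) :
    (p.eraseIdx (n + 1)).getLast? = p.getLast? := by
  rw [List.getLast?_eq_getElem?, List.getLast?_eq_getElem?, length_eraseIdx_succ hn,
    List.getElem?_eraseIdx, if_neg (by omega)]
  congr 1
  omega

end EraseIdx

section Paths

variable {G D : PDAG V} {X Y Z : Set V} {p : List V} {n : ℕ}

lemma IsPath.eraseIdx (hp : D.IsPath p) (hn : n + 2 < p.length) (hadj : D.adj p[n] p[n + 2]) :
    D.IsPath (p.eraseIdx (n + 1)) := by
  refine ⟨by rw [length_eraseIdx_succ hn]; omega, hp.2.1.sublist (List.eraseIdx_sublist _ _),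
    fun e he => ?_⟩
  rcases mem_consPairs_eraseIdx_cases hn he with he | rfl
  exacts [hp.2.2 e he, hadj]

lemma ProperPathFromTo.eraseIdx (hp : D.ProperPathFromTo X Y p) (hn : n + 2 < p.length)
    (hadj : D.adj p[n] p[n + 2]) : D.ProperPathFromTo X Y (p.eraseIdx (n + 1)) := by
  obtain ⟨hpath, hX, hY, htail⟩ := hp
  refine ⟨hpath.eraseIdx hn hadj, ?_, ?_, fun v hv => htail v ?_⟩
  · rwa [head?_eraseIdx_succ]
  · rwa [getLast?_eraseIdx_succ hn]
  · rw [tail_eraseIdx_succ] at hv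
    exact List.mem_of_mem_eraseIdx hv

lemma ProperPathFromTo.of_represented (hrep : RepresentedBy D G)
    (hp : D.ProperPathFromTo X Y p) : G.ProperPathFromTo X Y p :=
  ⟨⟨hp.1.1, hp.1.2.1, fun e he => hrep.adj_iff.mp (hp.1.2.2 e he)⟩, hp.2⟩

lemma IsDAG.isChain_of_not_nonCausal (hD : D.IsDAG) (hp : D.IsPath p) (h : ¬ D.NonCausal p) :
    p.IsChain D.dir :=
  isChain_iff_consPairs.mpr fun e he =>
    (hD.dir_or_dir (hp.2.2 e he)).resolve_right fun hb => h ⟨hp, e, he, hb⟩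

lemma bPossCausal_of_pairwise (hp : G.IsPath p) (h : p.Pairwise fun x y => ¬ G.dir y x) :
    G.BPossCausal p :=
  ⟨hp, fun i j hij => List.pairwise_iff_get.mp h i j hij⟩

lemma pairwise_transGen_of_isChain (hp : p.IsChain D.dir) : p.Pairwise (Relation.TransGen D.dir) :=
  List.isChain_iff_pairwise.mp (hp.imp fun _ _ => .single)

lemma bPossCausal_of_isChain (hrep : RepresentedBy D G) (hlen : 2 ≤ p.length)
    (hp : p.IsChain D.dir) : G.BPossCausal p := by
  have hpw := pairwise_transGen_of_isChain hp
  refine bPossCausal_of_pairwise ⟨hlen, hpw.imp ?_, fun e he => ?_⟩ (hpw.imp ?_)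
  · rintro x _ hxy rfl
    exact D.acyclic x hxy
  · exact hrep.adj_iff.mp (.inl (isChain_iff_consPairs.mp hp e he))
  · exact fun hxy => hrep.not_dir_of_transGen hxy

lemma bPossDescNode_of_desc (hrep : RepresentedBy D G) {w z : V} (h : D.Desc w z) :
    G.BPossDescNode w z := by
  rcases h with rfl | h
  · exact .inl rfl
  obtain ⟨l, hl, hlast⟩ := List.exists_isChain_cons_of_relationReflTransGen h.to_reflTransGen
  cases l with
  | nil => exact absurd h (hlast ▸ D.acyclic w)
  | cons v l =>
    refine .inr ⟨w :: v :: l, bPossCausal_of_isChain hrep (by simp) hl, rfl, ?_⟩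
    rw [List.getLast?_eq_some_getLast (List.cons_ne_nil _ _), hlast]

end Paths

section DConnection

variable {G D : PDAG V} {X Y Z : Set V} {p : List V} {n : ℕ} {v w x y x' y' : V}

def An (D : PDAG V) (Z : Set V) : Set V := {v | ∃ z ∈ Z, D.Desc v z}

def DConnAt (D : PDAG V) (Z : Set V) (t : V × V × V) : Prop :=
  (D.ColliderAt t → t.2.1 ∈ D.An Z) ∧ (¬ D.ColliderAt t → t.2.1 ∉ Z)

lemma dConn_iff : D.DConn p Z ↔ ∀ t ∈ triples p, D.DConnAt Z t := Iff.rfl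

lemma mem_an_of_mem (hv : v ∈ Z) : v ∈ D.An Z := ⟨v, hv, .inl rfl⟩

lemma mem_an_of_dir (h : D.dir v w) (hw : w ∈ D.An Z) : v ∈ D.An Z := by
  obtain ⟨z, hz, rfl | hwz⟩ := hw
  exacts [⟨w, hz, .inr (.single h)⟩, ⟨z, hz, .inr (.head h hwz)⟩]

lemma dConnAt_of_notMem_of_mem_an (hv : v ∉ Z) (hv' : v ∈ D.An Z) : D.DConnAt Z (x, v, y) :=
  ⟨fun _ => hv', fun _ => hv⟩

lemma dConnAt_of_notMem_of_dir (hv : v ∉ Z) (h : D.dir v x ∨ D.dir v y) :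
    D.DConnAt Z (x, v, y) :=
  ⟨fun hc => (h.elim (D.dir_asymm · hc.1) (D.dir_asymm · hc.2)).elim, fun _ => hv⟩

lemma DConnAt.notMem (h : D.DConnAt Z (x, v, y)) (hout : D.dir v x ∨ D.dir v y) : v ∉ Z :=
  h.2 fun hc => hout.elim (D.dir_asymm · hc.1) (D.dir_asymm · hc.2)

lemma DConnAt.congr (h : D.DConnAt Z (x, v, y)) (hx : D.dir x' v ↔ D.dir x v)
    (hy : D.dir y' v ↔ D.dir y v) : D.DConnAt Z (x', v, y') := by
  unfold DConnAt ColliderAt at *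
  simpa only [hx, hy] using h

lemma DConn.eraseIdx (h : D.DConn p Z) (hn : n + 2 < p.length)
    (hL : ∀ w, (w, p[n], p[n + 1]) ∈ triples p → D.DConnAt Z (w, p[n], p[n + 2]))
    (hR : ∀ u, (p[n + 1], p[n + 2], u) ∈ triples p → D.DConnAt Z (p[n], p[n + 2], u)) :
    D.DConn (p.eraseIdx (n + 1)) Z := by
  intro t ht
  rcases mem_triples_eraseIdx_cases hn ht with ht | ⟨w, rfl, hw⟩ | ⟨u, rfl, hu⟩
  exacts [h t ht, hL w hw, hR u hu]

lemma notMem_an_of_bPossCausal (hrep : RepresentedBy D G) (hforb : Z ∩ G.BForb X Y = ∅)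
    (hp : G.ProperPathFromTo X Y p) (hc : G.BPossCausal p) (hv : v ∈ p.tail) : v ∉ D.An Z := by
  rintro ⟨z, hz, hvz⟩
  have : z ∈ Z ∩ G.BForb X Y :=
    ⟨hz, v, p, hp.2.2.2 v hv, hp, hc, List.mem_of_mem_tail hv, bPossDescNode_of_desc hrep hvz⟩
  simp [hforb] at this

end DConnection

section Shortest

variable {G D : PDAG V} {X Y Z : Set V} {p : List V} {a b c : V}

lemma exists_colliderAt (hD : D.IsDAG) :
    ∀ {x v : V} {l : List V}, D.dir x v → (∀ e ∈ consPairs (x :: v :: l), D.adj e.1 e.2) →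
      (∃ e ∈ consPairs (x :: v :: l), D.dir e.2 e.1) →
      ∃ t ∈ triples (x :: v :: l), D.ColliderAt t
  | x, v, [], hxv, _, ⟨e, he, hb⟩ => by
    obtain rfl : e = (x, v) := by simpa [consPairs] using he
    exact (D.dir_asymm hxv hb).elim
  | x, v, y :: l, hxv, hadj, ⟨e, he, hb⟩ => by
    rcases hD.dir_or_dir (hadj (v, y) (by simp [consPairs])) with hvy | hyv
    · rcases List.mem_cons.mp he with rfl | he
      · exact (D.dir_asymm hxv hb).elim
      obtain ⟨t, ht, hc⟩ :=
        exists_colliderAt hD hvy (fun e he => hadj e (List.mem_cons_of_mem _ he)) ⟨e, he, hb⟩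
      exact ⟨t, List.mem_cons_of_mem _ ht, hc⟩
    · exact ⟨(x, v, y), List.mem_cons_self, hxv, hyv⟩

lemma bNonCausal_of_nonCausal (hamen : G.BAmenable X Y) (hforb : Z ∩ G.BForb X Y = ∅)
    (hD : D.IsDAG) (hrep : RepresentedBy D G) (hp : D.ProperPathFromTo X Y p)
    (hnc : D.NonCausal p) (hconn : D.DConn p Z) : G.BNonCausal p := by
  have hGp := hp.of_represented hrep
  by_contra hbnc
  have hc : G.BPossCausal p := ⟨hGp.1, fun i j hij hd => hbnc ⟨hGp.1, i, j, hij, hd⟩⟩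
  obtain ⟨x, v, l, rfl⟩ : ∃ x v l, p = x :: v :: l := by
    match p, hp.1.1 with
    | x :: v :: l, _ => exact ⟨x, v, l, rfl⟩
  obtain ⟨⟨_, _, _⟩, ht, hcol⟩ :=
    exists_colliderAt hD (hrep.dir (hamen _ hGp hc x v rfl rfl)) hp.1.2.2 hnc.2
  exact notMem_an_of_bPossCausal hrep hforb hGp hc
    (mem_tail_of_mem_consPairs (consPairs_of_mem_triples ht).1) ((hconn _ ht).1 hcol)

def IsShortestNonCausalDConn (D : PDAG V) (X Y Z : Set V) (p : List V) : Prop :=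
  D.ProperPathFromTo X Y p ∧ D.NonCausal p ∧ D.DConn p Z ∧
    ∀ q, D.ProperPathFromTo X Y q → D.NonCausal q → D.DConn q Z → p.length ≤ q.length

lemma IsShortestNonCausalDConn.shortcut (hmin : D.IsShortestNonCausalDConn X Y Z p)
    (hD : D.IsDAG) (hrep : RepresentedBy D G) (hforb : Z ∩ G.BForb X Y = ∅)
    (ht : (a, b, c) ∈ triples p) (hac : D.adj a c)
    (hL : ∀ w, (w, a, b) ∈ triples p → D.DConnAt Z (w, a, c))
    (hR : ∀ u, (b, c, u) ∈ triples p → D.DConnAt Z (a, c, u)) :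
    D.dir a c ∧ (∀ e ∈ consPairs p, e ≠ (a, b) → e ≠ (b, c) → D.dir e.1 e.2) ∧
      ∀ v ∈ p.tail, v ≠ b → v ∉ D.An Z := by
  obtain ⟨n, hn, hq⟩ := mem_triples_iff.mp ht
  simp only [Prod.mk.injEq] at hq
  obtain ⟨rfl, rfl, rfl⟩ := hq
  obtain ⟨hp, -, hconn, hshort⟩ := hmin
  have hq := hp.eraseIdx hn hac
  have hchain : (p.eraseIdx (n + 1)).IsChain D.dir := hD.isChain_of_not_nonCausal hq.1 fun hnc =>
    absurd (hshort _ hq hnc (hconn.eraseIdx hn hL hR)) (by rw [length_eraseIdx_succ hn]; omega)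
  have hfwd := isChain_iff_consPairs.mp hchain
  refine ⟨hfwd _ (bridge_mem_consPairs_eraseIdx hn),
    fun e he h₁ h₂ => hfwd e (mem_consPairs_eraseIdx hn he h₁ h₂), fun v hv hvb => ?_⟩
  exact notMem_an_of_bPossCausal hrep hforb (hq.of_represented hrep)
    (bPossCausal_of_isChain hrep hq.1.1 hchain) (mem_tail_eraseIdx hn hv hvb)

end Shortest

section Triples

variable {G D : PDAG V} {X Y Z : Set V} {p : List V} {a b c : V}

lemma bPossCausal_of_fork_head {r : List V} (hrep : RepresentedBy D G)
    (hp : G.IsPath (a :: b :: c :: r)) (hcr : (c :: r).IsChain D.dir) (hac : D.dir a c)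
    (hbc : D.dir b c) (hba : ¬ G.dir b a) : G.BPossCausal (a :: b :: c :: r) := by
  have ha := pairwise_transGen_of_isChain (hcr.cons_cons hac)
  have hb := pairwise_transGen_of_isChain (hcr.cons_cons hbc)
  refine bPossCausal_of_pairwise hp (List.pairwise_cons.mpr ⟨?_, List.pairwise_cons.mpr
    ⟨fun y hy => hrep.not_dir_of_transGen (List.rel_of_pairwise_cons hb hy),
      hb.of_cons.imp hrep.not_dir_of_transGen⟩⟩)
  rintro y (_ | ⟨_, hy⟩)
  exacts [hba, hrep.not_dir_of_transGen (List.rel_of_pairwise_cons ha hy)]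

lemma IsShortestNonCausalDConn.false_of_chain
    (hmin : D.IsShortestNonCausalDConn X Y Z p) (hD : D.IsDAG) (hrep : RepresentedBy D G)
    (hforb : Z ∩ G.BForb X Y = ∅) (ht : (a, b, c) ∈ triples p)
    (hab : D.dir a b) (hbc : D.dir b c) (hac : D.dir a c) : False := by
  have hconn := dConn_iff.mp hmin.2.2.1
  obtain ⟨-, hfwd, -⟩ := hmin.shortcut hD hrep hforb ht (.inl hac)
    (fun w hw => (hconn _ hw).congr Iff.rfl
      (iff_of_false (D.dir_asymm hac) (D.dir_asymm hab)))
    (fun u hu => (hconn _ hu).congr (iff_of_true hac hbc) Iff.rfl)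
  obtain ⟨e, he, hback⟩ := hmin.2.1.2
  refine D.dir_asymm (hfwd e he ?_ ?_) hback <;> rintro rfl
  exacts [D.dir_asymm hab hback, D.dir_asymm hbc hback]

lemma IsShortestNonCausalDConn.false_of_rev_chain
    (hmin : D.IsShortestNonCausalDConn X Y Z p) (hD : D.IsDAG) (hrep : RepresentedBy D G)
    (hforb : Z ∩ G.BForb X Y = ∅) (ht : (a, b, c) ∈ triples p)
    (hba : D.dir b a) (hcb : D.dir c b) (hca : D.dir c a) : False := by
  have hconn := dConn_iff.mp hmin.2.2.1
  obtain ⟨hac, -, -⟩ := hmin.shortcut hD hrep hforb ht (.inr (.inl hca))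
    (fun w hw => (hconn _ hw).congr Iff.rfl (iff_of_true hca hba))
    (fun u hu => (hconn _ hu).congr
      (iff_of_false (D.dir_asymm hca) (D.dir_asymm hcb)) Iff.rfl)
  exact D.dir_asymm hac hca

lemma IsShortestNonCausalDConn.false_of_collider
    (hmin : D.IsShortestNonCausalDConn X Y Z p) (hD : D.IsDAG) (hrep : RepresentedBy D G)
    (hforb : Z ∩ G.BForb X Y = ∅) (ht : (a, b, c) ∈ triples p)
    (hab : D.dir a b) (hcb : D.dir c b) (hac : D.adj a c) : False := by
  have hconn := dConn_iff.mp hmin.2.2.1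
  have hb : b ∈ D.An Z := (hconn _ ht).1 ⟨hab, hcb⟩
  rcases hD.dir_or_dir hac with hac | hca
  · obtain ⟨-, -, hclean⟩ := hmin.shortcut hD hrep hforb ht (.inl hac)
      (fun w hw => (hconn _ hw).congr Iff.rfl
        (iff_of_false (D.dir_asymm hac) (D.dir_asymm hab)))
      (fun u hu => dConnAt_of_notMem_of_mem_an ((hconn _ hu).notMem (.inl hcb))
        (mem_an_of_dir hcb hb))
    exact hclean c (mem_tail_of_mem_consPairs (consPairs_of_mem_triples ht).2) (ne_of_dir hcb)
      (mem_an_of_dir hcb hb)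
  · obtain ⟨hac, -, -⟩ := hmin.shortcut hD hrep hforb ht (.inr (.inl hca))
      (fun w hw => dConnAt_of_notMem_of_mem_an ((hconn _ hw).notMem (.inr hab))
        (mem_an_of_dir hab hb))
      (fun u hu => (hconn _ hu).congr
        (iff_of_false (D.dir_asymm hca) (D.dir_asymm hcb)) Iff.rfl)
    exact D.dir_asymm hac hca

lemma IsShortestNonCausalDConn.false_of_fork_of_dir_ac
    (hmin : D.IsShortestNonCausalDConn X Y Z p) (hD : D.IsDAG) (hrep : RepresentedBy D G)
    (hforb : Z ∩ G.BForb X Y = ∅) (ht : (a, b, c) ∈ triples p)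
    (hamen : G.BAmenable X Y) (hba : D.dir b a) (hbc : D.dir b c)
    (hac : D.dir a c) (hG : ¬ G.dir b a) : False := by
  have hconn := dConn_iff.mp hmin.2.2.1
  by_cases hre : ∃ w, (w, a, b) ∈ triples p ∧ D.dir w a ∧ a ∈ Z
  · obtain ⟨w, hw, hwa, haZ⟩ := hre
    have hb : b ∈ D.An Z := mem_an_of_dir hba (mem_an_of_mem haZ)
    obtain ⟨-, -, hclean⟩ := hmin.shortcut hD hrep hforb hw (hrep.adj_of_collider hwa hba hG)
      (fun v hv => dConnAt_of_notMem_of_mem_an ((hconn _ hv).notMem (.inr hwa))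
        (mem_an_of_dir hwa (mem_an_of_mem haZ)))
      (fun u hu => dConnAt_of_notMem_of_mem_an ((hconn _ hu).notMem (.inl hba)) hb)
    exact hclean b (mem_tail_of_mem_consPairs (consPairs_of_mem_triples ht).1) (ne_of_dir hba) hb
  push Not at hre
  obtain ⟨-, hfwd, hclean⟩ := hmin.shortcut hD hrep hforb ht (.inl hac)
    (fun w hw => dConnAt_of_notMem_of_dir
      (fun haZ => (hconn _ hw).2 (fun hc => hre w hw hc.1 haZ) haZ) (.inr hac))
    (fun u hu => (hconn _ hu).congr (iff_of_true hac hbc) Iff.rfl)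
  rcases eq_cons_or_mem_triples_of_mem_triples ht with ⟨r, rfl⟩ | ⟨w, hw⟩
  · have hnd := hmin.1.1.2.1
    have hcr : (c :: r).IsChain D.dir := isChain_iff_consPairs.mpr fun e he => by
      have he₁ := (List.of_mem_zip he).1
      refine hfwd e (List.mem_cons_of_mem _ (List.mem_cons_of_mem _ he)) ?_ ?_ <;> rintro rfl <;>
        simp_all
    have hGp := hmin.1.of_represented hrep
    exact D.dir_asymm hba (hrep.dir (hamen _ hGp
      (bPossCausal_of_fork_head hrep hGp.1 hcr hac hbc hG) a b rfl rfl))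
  · have hwa := (consPairs_of_mem_triples hw).1
    refine hclean a (mem_tail_of_mem_consPairs hwa) (ne_of_dir hba).symm
      ((hconn _ hw).1 ⟨hfwd _ hwa ?_ ?_, hba⟩) <;> simp [(ne_of_dir hba).symm, ne_of_dir hac]

lemma IsShortestNonCausalDConn.false_of_fork_of_dir_ca
    (hmin : D.IsShortestNonCausalDConn X Y Z p) (hD : D.IsDAG) (hrep : RepresentedBy D G)
    (hforb : Z ∩ G.BForb X Y = ∅) (ht : (a, b, c) ∈ triples p)
    (hba : D.dir b a) (hbc : D.dir b c) (hca : D.dir c a)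
    (hG : ¬ G.dir b c) : False := by
  have hconn := dConn_iff.mp hmin.2.2.1
  by_cases hre : ∃ u, (b, c, u) ∈ triples p ∧ D.dir u c ∧ c ∈ Z
  · obtain ⟨u, hu, huc, hcZ⟩ := hre
    obtain ⟨-, hfwd, -⟩ := hmin.shortcut hD hrep hforb hu
      (adj_comm.mp (hrep.adj_of_collider huc hbc hG))
      (fun v hv => dConnAt_of_notMem_of_mem_an ((hconn _ hv).notMem (.inr hbc))
        (mem_an_of_dir hbc (mem_an_of_mem hcZ)))
      (fun v hv => dConnAt_of_notMem_of_mem_an ((hconn _ hv).notMem (.inl huc))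
        (mem_an_of_dir huc (mem_an_of_mem hcZ)))
    refine D.dir_asymm (hfwd _ (consPairs_of_mem_triples ht).1 ?_ ?_) hba <;>
      simp [(ne_of_dir hba).symm, (ne_of_dir hca).symm]
  push Not at hre
  obtain ⟨hac, -, -⟩ := hmin.shortcut hD hrep hforb ht (.inr (.inl hca))
    (fun w hw => (hconn _ hw).congr Iff.rfl (iff_of_true hca hba))
    (fun u hu => dConnAt_of_notMem_of_dir
      (fun hcZ => (hconn _ hu).2 (fun hc => hre u hu hc.2 hcZ) hcZ) (.inl hca))
  exact D.dir_asymm hac hca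

end Triples

section Main

variable {G D : PDAG V} {X Y Z : Set V} {p : List V} {a b c : V}

lemma IsShortestNonCausalDConn.dir_out_of_adj (hmin : D.IsShortestNonCausalDConn X Y Z p)
    (hamen : G.BAmenable X Y) (hD : D.IsDAG) (hrep : RepresentedBy D G)
    (hforb : Z ∩ G.BForb X Y = ∅) (ht : (a, b, c) ∈ triples p) (hac : G.adj a c) :
    G.dir b a ∨ G.dir b c := by
  by_contra! ⟨hGba, hGbc⟩
  have hacD := hrep.adj_iff.mpr hac
  obtain ⟨hab, hbc⟩ := consPairs_of_mem_triples ht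
  rcases hD.dir_or_dir (hmin.1.1.2.2 _ hab) with hab | hba <;>
    rcases hD.dir_or_dir (hmin.1.1.2.2 _ hbc) with hbc | hcb
  · rcases hD.dir_or_dir hacD with hac | hca
    · exact hmin.false_of_chain hD hrep hforb ht hab hbc hac
    · exact D.not_dir_cycle3 hab hbc hca
  · exact hmin.false_of_collider hD hrep hforb ht hab hcb hacD
  · rcases hD.dir_or_dir hacD with hac | hca
    · exact hmin.false_of_fork_of_dir_ac hD hrep hforb ht hamen hba hbc hac hGba
    · exact hmin.false_of_fork_of_dir_ca hD hrep hforb ht hba hbc hca hGbc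
  · rcases hD.dir_or_dir hacD with hac | hca
    · exact D.not_dir_cycle3 hac hcb hba
    · exact hmin.false_of_rev_chain hD hrep hforb ht hba hcb hca

lemma ClosedMeek.colliderAt_or_defNonColliderAt (hG : G.ClosedMeek) (hab : G.adj a b)
    (hbc : G.adj b c) (hout : G.adj a c → G.dir b a ∨ G.dir b c) :
    G.ColliderAt (a, b, c) ∨ G.DefNonColliderAt (a, b, c) := by
  by_cases h : G.dir b a ∨ G.dir b c
  · exact .inr (h.elim .inl (.inr ∘ .inl))
  push Not at h
  obtain ⟨hba, hbc'⟩ := h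
  have hac : ¬ G.adj a c := fun hac => (hout hac).elim hba hbc'
  rcases hab with hab | hab | hab <;> rcases hbc with hbc | hcb | hbc <;> try contradiction
  · exact .inl ⟨hab, hcb⟩
  · exact (hbc' (hG.1 a b c hab hbc hac)).elim
  · exact (hba (hG.1 c b a hcb hab.symm (mt adj_comm.mp hac))).elim
  · exact .inr (.inr (.inr ⟨hab, hbc, hac⟩))

end Main

end PDAG

theorem stmt9_general {V : Type} (G D : PDAG V) (hG : G.ClosedMeek) (X Y Z : Set V)
    (hamen : G.BAmenable X Y) (hforb : Z ∩ G.BForb X Y = ∅)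
    (hD : D.IsDAG) (hrep : PDAG.RepresentedBy D G)
    (p : List V) (hp : D.ProperPathFromTo X Y p) (hnc : D.NonCausal p)
    (hconn : D.DConn p Z)
    (hshort : ∀ q, D.ProperPathFromTo X Y q → D.NonCausal q → D.DConn q Z →
      p.length ≤ q.length) :
    G.ProperPathFromTo X Y p ∧ G.BNonCausal p ∧ G.DefiniteStatus p ∧
      ∀ t ∈ PDAG.triples p, G.ColliderAt t → ¬ G.adj t.1 t.2.2 := by
  have hmin : D.IsShortestNonCausalDConn X Y Z p := ⟨hp, hnc, hconn, hshort⟩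
  have hGp := hp.of_represented hrep
  refine ⟨hGp, PDAG.bNonCausal_of_nonCausal hamen hforb hD hrep hp hnc hconn,
    fun ⟨a, b, c⟩ ht => ?_, fun ⟨a, b, c⟩ ht hcol hac => ?_⟩
  · obtain ⟨hab, hbc⟩ := PDAG.consPairs_of_mem_triples ht
    exact hG.colliderAt_or_defNonColliderAt (hGp.1.2.2 _ hab) (hGp.1.2.2 _ hbc)
      (hmin.dir_out_of_adj hamen hD hrep hforb ht)
  · exact (hmin.dir_out_of_adj hamen hD hrep hforb ht hac).elim
      (G.dir_asymm · hcol.1) (G.dir_asymm · hcol.2)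

/-- a shortest proper non-causal d-connecting path in a represented DAG
corresponds in `G` to a proper b-non-causal definite status path whose collider triples
have non-adjacent endpoints. -/
theorem stmt9 {V : Type} (G D : PDAG V) (hG : G.ClosedMeek) (X Y Z : Set V)
    (hdisj : Disjoint X Y ∧ Disjoint Z X ∧ Disjoint Z Y)
    (hamen : G.BAmenable X Y) (hforb : Z ∩ G.BForb X Y = ∅)
    (hD : D.IsDAG) (hrep : PDAG.RepresentedBy D G)
    (p : List V) (hp : D.ProperPathFromTo X Y p) (hnc : D.NonCausal p)
    (hconn : D.DConn p Z)
    (hshort : ∀ q, D.ProperPathFromTo X Y q → D.NonCausal q → D.DConn q Z →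
      p.length ≤ q.length) :
    G.ProperPathFromTo X Y p ∧ G.BNonCausal p ∧ G.DefiniteStatus p ∧
      ∀ t ∈ PDAG.triples p, G.ColliderAt t → ¬ G.adj t.1 t.2.2 :=
  stmt9_general G D hG X Y Z hamen hforb hD hrep p hp hnc hconn hshort
end

section
/- Deciding whether a node W is a b-possible descendant of a node set X in a maximal PDAG G can be reduced to reachability along unshielded definite-status b-possibly causal paths: W ∈ b-PossDe(X,G) if and only if W ∈ X or there is an unshielded path ⟨X = V_0, …, V_k = W⟩ from some X ∈ X to W in G such that no edge V_i ← V_{i+1} (0 ≤ i < k) is in G. -/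
/-!
Being b-possibly causal is inherited by subsequences, so a b-possibly causal path can be
shortcut across every shielded triple until it is unshielded. Conversely, let a path be
unshielded with no edge on it pointing backwards, and suppose `b → u` for a later node `b`.
Along the undirected edges leaving `u` the edge is carried forward (`a → b — c` forces `a → c`
in a maximal PDAG); at the first directed edge, Meek's rule R1 orients the rest of the path
forwards, and `b → u` closes a directed cycle.
-/

namespace PDAG

variable {V : Type}

theorem forall_mem_consPairs_iff_isChain {R : V → V → Prop} :
    ∀ {p : List V}, (∀ e ∈ consPairs p, R e.1 e.2) ↔ p.IsChain R
  | [] | [_] => by simp [consPairs]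
  | a :: b :: t => by
    rw [List.isChain_cons_cons, ← forall_mem_consPairs_iff_isChain]
    exact List.forall_mem_cons

theorem triples_subset_cons (a : V) : ∀ p : List V, triples p ⊆ triples (a :: p)
  | [] | [_] => by simp [triples]
  | _ :: _ :: _ => List.subset_cons_self _ _

theorem exists_eq_append_of_mem_triples {a b c : V} :
    ∀ {p : List V}, (a, b, c) ∈ triples p → ∃ l r, p = l ++ a :: b :: c :: r
  | [] | [_] | [_, _] => by simp [triples]
  | x :: y :: z :: t => by
    rintro (⟨⟩ | ⟨_, h⟩)
    · exact ⟨[], t, rfl⟩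
    · obtain ⟨l, r, hlr⟩ := exists_eq_append_of_mem_triples h
      exact ⟨x :: l, r, by rw [hlr, List.cons_append]⟩

theorem exists_sublist_isChain_forall_triples {R : V → V → Prop} (p : List V)
    (hp : p.IsChain R) :
    ∃ q, q.Sublist p ∧ q.head? = p.head? ∧ q.getLast? = p.getLast? ∧
      (2 ≤ p.length → 2 ≤ q.length) ∧ q.IsChain R ∧ ∀ t ∈ triples q, ¬ R t.1 t.2.2 := by
  by_cases hq : ∀ t ∈ triples p, ¬ R t.1 t.2.2
  · exact ⟨p, List.Sublist.refl p, rfl, rfl, id, hp, hq⟩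
  obtain ⟨⟨a, b, c⟩, hmem, hac⟩ : ∃ t ∈ triples p, R t.1 t.2.2 := by simpa using hq
  obtain ⟨l, r, rfl⟩ := exists_eq_append_of_mem_triples hmem
  have hsub : (l ++ a :: c :: r).Sublist (l ++ a :: b :: c :: r) :=
    ((List.Sublist.refl _).cons b).cons_cons a |>.append_left l
  have hchain : (l ++ a :: c :: r).IsChain R := by
    rw [List.isChain_append_cons_cons] at hp ⊢
    exact ⟨hp.1, hac, (List.isChain_cons_cons.1 hp.2.2).2⟩
  obtain ⟨q, hqsub, hhead, hlast, hlen, hq⟩ :=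
    exists_sublist_isChain_forall_triples (l ++ a :: c :: r) hchain
  refine ⟨q, hqsub.trans hsub, ?_, ?_, fun _ => hlen (by simp; omega), hq⟩
  · rw [hhead]; cases l <;> rfl
  · simp [hlast, List.getLast?_append]
termination_by p.length
decreasing_by subst_vars; simp

variable {G : PDAG V}

theorem not_adj_self (x : V) : ¬ G.adj x x := by
  rintro (h | h | h | h)
  · exact G.acyclic x (.single h)
  · exact G.acyclic x (.single h)
  · exact G.undir_irrefl x h
  · exact G.undir_irrefl x h

theorem undirE.symm {x y : V} (h : G.undirE x y) : G.undirE y x := Or.symm h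

theorem undirE.not_dir {x y : V} (h : G.undirE x y) : ¬ G.dir x y :=
  fun hxy => h.elim (G.dir_not_undir x y hxy) (G.dir_not_undir x y hxy ∘ G.undir_symm)

theorem isPath_iff {p : List V} :
    G.IsPath p ↔ 2 ≤ p.length ∧ p.Nodup ∧ p.IsChain G.adj := by
  rw [IsPath, forall_mem_consPairs_iff_isChain]

theorem bPossCausal_iff {p : List V} :
    G.BPossCausal p ↔ G.IsPath p ∧ p.Pairwise fun x y => ¬ G.dir y x := by
  rw [BPossCausal, List.pairwise_iff_get]
  rfl

theorem Unshielded.of_cons {u : V} {p : List V} (h : G.Unshielded (u :: p)) :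
    G.Unshielded p :=
  fun t ht => h t (triples_subset_cons u p ht)

theorem BPossCausal.localPossCausal {p : List V} (hp : G.BPossCausal p) :
    G.LocalPossCausal p :=
  ⟨hp.1, forall_mem_consPairs_iff_isChain.2 (bPossCausal_iff.1 hp).2.isChain⟩

theorem BPossCausal.exists_unshielded {p : List V} (hp : G.BPossCausal p) :
    ∃ q, q.head? = p.head? ∧ q.getLast? = p.getLast? ∧ G.BPossCausal q ∧ G.Unshielded q := by
  obtain ⟨hpath, hback⟩ := bPossCausal_iff.1 hp
  obtain ⟨hlen, hnodup, hchain⟩ := isPath_iff.1 hpath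
  obtain ⟨q, hsub, hhead, hlast, hqlen, hqchain, hq⟩ :=
    exists_sublist_isChain_forall_triples p hchain
  have hqpath : G.IsPath q := isPath_iff.2 ⟨hqlen hlen, hnodup.sublist hsub, hqchain⟩
  exact ⟨q, hhead, hlast, bPossCausal_iff.2 ⟨hqpath, hback.sublist hsub⟩, hq⟩

namespace ClosedMeek

variable (hG : G.ClosedMeek)
include hG

theorem dir_of_dir_of_undirE {a b c : V} (hab : G.dir a b) (hbc : G.undirE b c) :
    G.dir a c := by
  by_cases hac : G.adj a c
  · rcases hac with hac | hca | hac
    · exact hac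
    · exact absurd (hG.2.1 c a b hca hab hbc.symm) hbc.symm.not_dir
    -- Meek's rule R3 with its two outer nodes equal, allowed since `¬ G.adj a a`.
    · exact absurd (hG.2.2.1 c b a a hbc.symm hac.symm hac.symm hab hab (not_adj_self a))
        hbc.symm.not_dir
  · exact absurd (hG.1 a b c hab hbc hac) hbc.not_dir

theorem isChain_dir_of_unshielded : ∀ {u v : V} {t : List V},
    G.Unshielded (u :: v :: t) → (u :: v :: t).IsChain G.adj →
    (u :: v :: t).IsChain (fun x y => ¬ G.dir y x) → G.dir u v →
    (u :: v :: t).IsChain G.dir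
  | _, _, [], _, _, _, huv => List.isChain_pair.2 huv
  | u, v, w :: t, hu, hadj, hfwd, huv => by
    have hvw : G.dir v w := by
      rcases (List.isChain_cons_cons.1 hadj.tail).1 with hvw | hwv | hvw
      · exact hvw
      · exact absurd hwv (List.isChain_cons_cons.1 hfwd.tail).1
      · exact hG.1 u v w huv hvw (hu _ List.mem_cons_self)
    exact List.isChain_cons_cons.2
      ⟨huv, isChain_dir_of_unshielded hu.of_cons hadj.tail hfwd.tail hvw⟩

theorem not_dir_of_mem_of_unshielded : ∀ {u : V} {t : List V},
    G.Unshielded (u :: t) → (u :: t).IsChain G.adj →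
    (u :: t).IsChain (fun x y => ¬ G.dir y x) → ∀ b ∈ t, ¬ G.dir b u
  | _, [], _, _, _ => by simp
  | u, v :: t, hu, hadj, hfwd => by
    rintro b (_ | ⟨_, hb⟩) hbu
    · exact (List.isChain_cons_cons.1 hfwd).1 hbu
    rcases (List.isChain_cons_cons.1 hadj).1 with huv | hvu | huv
    · have hpath := (hG.isChain_dir_of_unshielded hu hadj hfwd huv).imp
        fun _ _ => Relation.TransGen.single
      have hub := List.pairwise_cons.1 hpath.pairwise |>.1 b (List.mem_cons_of_mem v hb)
      exact G.acyclic u (hub.tail hbu)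
    · exact (List.isChain_cons_cons.1 hfwd).1 hvu
    · exact not_dir_of_mem_of_unshielded hu.of_cons hadj.tail hfwd.tail b hb
        (hG.dir_of_dir_of_undirE hbu huv)

theorem pairwise_of_unshielded : ∀ {p : List V},
    G.Unshielded p → p.IsChain G.adj → p.IsChain (fun x y => ¬ G.dir y x) →
    p.Pairwise fun x y => ¬ G.dir y x
  | [], _, _, _ => List.Pairwise.nil
  | _ :: _, hu, hadj, hfwd => List.pairwise_cons.2
    ⟨hG.not_dir_of_mem_of_unshielded hu hadj hfwd,
      pairwise_of_unshielded hu.of_cons hadj.tail hfwd.tail⟩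

theorem bPossCausal_of_unshielded {p : List V} (hu : G.Unshielded p)
    (hp : G.LocalPossCausal p) : G.BPossCausal p :=
  bPossCausal_iff.2 ⟨hp.1, hG.pairwise_of_unshielded hu (isPath_iff.1 hp.1).2.2
    (forall_mem_consPairs_iff_isChain.1 hp.2)⟩

end ClosedMeek

end PDAG

/-- membership in the b-possible descendants of `X` is equivalent to
reachability along an unshielded path with no edge on it oriented backwards. -/
theorem stmt16 {V : Type} (G : PDAG V) (hG : G.ClosedMeek) (X : Set V) (W : V) :
    W ∈ G.BPossDe X ↔
      W ∈ X ∨ ∃ x ∈ X, ∃ p : List V, G.PathFromTo p x W ∧ G.Unshielded p ∧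
        ∀ e ∈ PDAG.consPairs p, ¬ G.dir e.2 e.1 := by
  refine or_congr_right ⟨?_, ?_⟩
  · rintro ⟨x, hx, p, hp, hpx, hpW⟩
    obtain ⟨q, hqx, hqW, hq, hqu⟩ := hp.exists_unshielded
    exact ⟨x, hx, q, ⟨hq.1, hqx.trans hpx, hqW.trans hpW⟩, hqu, hq.localPossCausal.2⟩
  · rintro ⟨x, hx, p, ⟨hp, hpx, hpW⟩, hu, hfwd⟩
    exact ⟨x, hx, p, hG.bPossCausal_of_unshielded hu ⟨hp, hfwd⟩, hpx, hpW⟩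
end
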